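/- arXiv:0909.1003 — 4 statements merged into one kernel-verified Lean document; each statement's English description precedes it below -/
import Mathlib

section
/- Let λ be the hyperbolic area measure λ(dx dy) = dx dy / y² on the upper half-plane, and let H = {(x,y) : -1/2 < x < 1/2, y > (2/π) tan(π|x|)}. Then for every t ∈ (0,1), λ(H ∩ (H + t)) = log(1/ sin(π t/2)), where H + t denotes the horizontal translate of H by t. -/
/-!
Since `∫_c^∞ dy / y² = 1 / c`, the hyperbolic area of the region above the graph of `f` over a
base set is `∫ dx / f(x)`. With `f x = (2/π) tan (π |x|)`, the set `H ∩ (H + t)` is the region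
above `max (f x) (f (x - t))` over `(t - 1/2, 1/2)`. This graph is symmetric about `t / 2`, and
to the right of `t / 2` it is `(2/π) tan (π x)`, whose reciprocal `(π/2) cot (π x)` has
primitive `log (sin (π x)) / 2`. Hence the area is `2 · (0 - log (sin (π t / 2)) / 2)`.
-/

open Real MeasureTheory

/-- The hyperbolic area measure `dx dy / y²` on the plane (supported on the upper half-plane
via the sets considered). -/
noncomputable def hypMeasure : Measure (ℝ × ℝ) :=
  volume.withDensity (fun p => ENNReal.ofReal (1 / p.2 ^ 2))

/-- The wedge-shaped region `H`. -/
def wedgeH : Set (ℝ × ℝ) :=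
  {p | -(1/2) < p.1 ∧ p.1 < 1/2 ∧ (2 / π) * Real.tan (π * |p.1|) < p.2}

/-- Horizontal translate of a planar set. -/
def htrans (A : Set (ℝ × ℝ)) (t : ℝ) : Set (ℝ × ℝ) := {p | (p.1 - t, p.2) ∈ A}

open Set
open scoped ENNReal

theorem Real.measurable_tan : Measurable tan := by
  have : tan = fun x => sin x / cos x := funext tan_eq_sin_div_cos
  exact this ▸ measurable_sin.div measurable_cos

lemma setLIntegral_Ioi_inv_sq {c : ℝ} (hc : 0 < c) :
    ∫⁻ y in Ioi c, ENNReal.ofReal (1 / y ^ 2) = ENNReal.ofReal (1 / c) := by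
  have hrpow : EqOn (fun y : ℝ => y ^ (-2 : ℝ)) (fun y => 1 / y ^ 2) (Ioi c) := fun y hy => by
    simp [rpow_neg (hc.trans hy).le]
  have hint : IntegrableOn (fun y : ℝ => 1 / y ^ 2) (Ioi c) :=
    (integrableOn_Ioi_rpow_of_lt (by norm_num) hc).congr_fun hrpow measurableSet_Ioi
  rw [← ofReal_integral_eq_lintegral_ofReal hint (ae_of_all _ fun y => by positivity),
    ← setIntegral_congr_fun measurableSet_Ioi hrpow, integral_Ioi_rpow_of_lt (by norm_num) hc]
  norm_num [rpow_neg_one]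

lemma hypMeasure_eq_prod :
    hypMeasure = volume.prod (volume.withDensity fun y : ℝ => ENNReal.ofReal (1 / y ^ 2)) := by
  rw [prod_withDensity_right (by fun_prop), ← Measure.volume_eq_prod]
  rfl

lemma hypMeasure_setOf_lt {s : Set ℝ} (hs : MeasurableSet s) {f : ℝ → ℝ} (hf : Measurable f)
    (hpos : ∀ x ∈ s, 0 < f x) :
    hypMeasure {p | p.1 ∈ s ∧ f p.1 < p.2} = ∫⁻ x in s, ENNReal.ofReal (1 / f x) := by
  have hmeas : MeasurableSet {p : ℝ × ℝ | p.1 ∈ s ∧ f p.1 < p.2} :=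
    (measurable_fst hs).inter (measurableSet_lt (hf.comp measurable_fst) measurable_snd)
  rw [hypMeasure_eq_prod, Measure.prod_apply hmeas, ← lintegral_indicator hs]
  congr 1 with x
  by_cases hx : x ∈ s
  · rw [indicator_of_mem hx, ← setLIntegral_Ioi_inv_sq (hpos x hx),
      ← withDensity_apply _ measurableSet_Ioi]
    congr 1 with y
    simp [hx]
  · simp [hx]

lemma setLIntegral_Ioo_ofReal_eq_sub {a b : ℝ} (hab : a ≤ b) {F f : ℝ → ℝ}
    (hcont : ContinuousOn F (Icc a b)) (hderiv : ∀ x ∈ Ioo a b, HasDerivAt F (f x) x)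
    (hnonneg : ∀ x ∈ Ioo a b, 0 ≤ f x) :
    ∫⁻ x in Ioo a b, ENNReal.ofReal (f x) = ENNReal.ofReal (F b - F a) := by
  have hint := intervalIntegral.integrableOn_deriv_of_nonneg hcont hderiv hnonneg
  rw [← ofReal_integral_eq_lintegral_ofReal (hint.mono_set Ioo_subset_Ioc_self)
      ((ae_restrict_iff' measurableSet_Ioo).2 (ae_of_all _ hnonneg)),
    ← integral_Ioc_eq_integral_Ioo, ← intervalIntegral.integral_of_le hab,
    intervalIntegral.integral_eq_sub_of_hasDerivAt_of_le hab hcont hderiv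
      ((intervalIntegrable_iff_integrableOn_Ioc_of_le hab).2 hint)]

noncomputable def wedgeHeight (x : ℝ) : ℝ := 2 / π * tan (π * |x|)

@[fun_prop]
lemma measurable_wedgeHeight : Measurable wedgeHeight :=
  measurable_const.mul (measurable_tan.comp (measurable_const.mul measurable_id.abs))

lemma wedgeHeight_pos {x : ℝ} (hx : x ≠ 0) (hx' : |x| < 1 / 2) : 0 < wedgeHeight x := by
  have := tan_pos_of_pos_of_lt_pi_div_two (x := π * |x|) (by positivity) (by nlinarith [pi_pos])
  unfold wedgeHeight; positivity

lemma wedgeHeight_le_of_abs_le {x y : ℝ} (h : |x| ≤ |y|) (hy : |y| < 1 / 2) :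
    wedgeHeight x ≤ wedgeHeight y := by
  have hmem : ∀ z : ℝ, |z| ≤ |y| → π * |z| ∈ Ioo (-(π / 2)) (π / 2) := fun z hz =>
    ⟨by nlinarith [pi_pos, abs_nonneg z], by nlinarith [pi_pos]⟩
  have := strictMonoOn_tan.monotoneOn (hmem x h) (hmem y le_rfl)
    (mul_le_mul_of_nonneg_left h pi_pos.le)
  unfold wedgeHeight; gcongr

lemma wedgeHeight_sub_comm (x y : ℝ) : wedgeHeight (x - y) = wedgeHeight (y - x) := by
  rw [wedgeHeight, wedgeHeight, abs_sub_comm]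

lemma wedgeH_inter_htrans {t : ℝ} (ht : 0 ≤ t) :
    wedgeH ∩ htrans wedgeH t =
      {p | p.1 ∈ Ioo (t - 1 / 2) (1 / 2) ∧
        max (wedgeHeight p.1) (wedgeHeight (p.1 - t)) < p.2} := by
  ext ⟨x, y⟩
  simp only [wedgeH, htrans, wedgeHeight, mem_inter_iff, mem_ofPred_eq, mem_Ioo, max_lt_iff]
  constructor
  · rintro ⟨⟨-, hx, hy⟩, hxt, -, hyt⟩
    exact ⟨⟨by linarith, hx⟩, hy, hyt⟩
  · rintro ⟨⟨hxt, hx⟩, hy, hyt⟩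
    exact ⟨⟨by linarith, hx, hy⟩, by linarith, by linarith, hyt⟩

lemma max_wedgeHeight_sub_pos {t x : ℝ} (ht0 : 0 < t)
    (hx : x ∈ Ioo (t - 1 / 2) (1 / 2)) : 0 < max (wedgeHeight x) (wedgeHeight (x - t)) := by
  rcases eq_or_ne x 0 with rfl | hx0
  · exact lt_max_of_lt_right <|
      wedgeHeight_pos (by linarith) (by rw [zero_sub, abs_neg, abs_of_pos ht0]; linarith [hx.1])
  · exact lt_max_of_lt_left (wedgeHeight_pos hx0 (abs_lt.2 ⟨by linarith [hx.1], hx.2⟩))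

lemma hasDerivAt_log_sin_pi_mul_div_two {x : ℝ} (hx : x ∈ Ioo 0 (1 / 2)) :
    HasDerivAt (fun x => log (sin (π * x)) / 2) (1 / wedgeHeight x) x := by
  have hsin : 0 < sin (π * x) :=
    sin_pos_of_pos_of_lt_pi (by nlinarith [pi_pos, hx.1]) (by nlinarith [pi_pos, hx.2])
  have hcos : 0 < cos (π * x) :=
    cos_pos_of_mem_Ioo ⟨by nlinarith [pi_pos, hx.1], by nlinarith [pi_pos, hx.2]⟩
  have hderiv := (((hasDerivAt_id x).const_mul π).sin.log hsin.ne').div_const 2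
  simp only [id, mul_one] at hderiv
  refine hderiv.congr_deriv ?_
  rw [wedgeHeight, abs_of_pos hx.1, tan_eq_sin_div_cos]
  field_simp

lemma setLIntegral_Ioo_comp_const_sub (f : ℝ → ℝ≥0∞) (t a b : ℝ) :
    ∫⁻ x in Ioo a b, f (t - x) = ∫⁻ x in Ioo (t - b) (t - a), f x := by
  rw [(volume.measurePreserving_sub_left t).setLIntegral_comp_emb
    (Homeomorph.subLeft t).measurableEmbedding, image_const_sub_Ioo]

lemma setLIntegral_Ioo_inv_wedgeHeight {a b : ℝ} (ha : 0 < a) (hab : a ≤ b) (hb : b ≤ 1 / 2) :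
    ∫⁻ x in Ioo a b, ENNReal.ofReal (1 / wedgeHeight x)
      = ENNReal.ofReal ((log (sin (π * b)) - log (sin (π * a))) / 2) := by
  have hsin : ∀ x ∈ Icc a b, sin (π * x) ≠ 0 := fun x hx =>
    (sin_pos_of_pos_of_lt_pi (by nlinarith [pi_pos, hx.1]) (by nlinarith [pi_pos, hx.2])).ne'
  rw [setLIntegral_Ioo_ofReal_eq_sub hab (fun x hx => ?cont)
    (fun x hx => hasDerivAt_log_sin_pi_mul_div_two ⟨ha.trans hx.1, hx.2.trans_le hb⟩)
    (fun x hx => ?nonneg), sub_div]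
  case cont =>
    exact ((continuous_sin.comp (continuous_const_mul π)).continuousAt.log (hsin x hx)).div_const
      2 |>.continuousWithinAt
  case nonneg =>
    have hx0 : 0 < x := ha.trans hx.1
    exact (one_div_pos.2 (wedgeHeight_pos hx0.ne' (by rw [abs_of_pos hx0]; linarith [hx.2]))).le

lemma setLIntegral_Ioo_inv_max_wedgeHeight {t : ℝ} (ht0 : 0 < t) (ht1 : t < 1) :
    ∫⁻ x in Ioo (t - 1 / 2) (1 / 2),
        ENNReal.ofReal (1 / max (wedgeHeight x) (wedgeHeight (x - t)))
      = 2 * ∫⁻ x in Ioo (t / 2) (1 / 2), ENNReal.ofReal (1 / wedgeHeight x) := by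
  have hsplit : Ioo (t - 1 / 2) (1 / 2) = Ioc (t - 1 / 2) (t / 2) ∪ Ioo (t / 2) (1 / 2) :=
    (Ioc_union_Ioo_eq_Ioo (by linarith) (by linarith)).symm
  have hdisj : Disjoint (Ioc (t - 1 / 2) (t / 2)) (Ioo (t / 2) (1 / 2)) :=
    disjoint_left.2 fun x hx hx' => hx.2.not_gt hx'.1
  have hleft : ∫⁻ x in Ioo (t - 1 / 2) (t / 2),
      ENNReal.ofReal (1 / max (wedgeHeight x) (wedgeHeight (x - t)))
        = ∫⁻ x in Ioo (t - 1 / 2) (t / 2), ENNReal.ofReal (1 / wedgeHeight (t - x)) := by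
    refine setLIntegral_congr_fun measurableSet_Ioo fun x ⟨hx₁, hx₂⟩ => ?_
    have habs : |x - t| = t - x := by rw [abs_sub_comm, abs_of_pos (by linarith)]
    rw [max_eq_right (wedgeHeight_le_of_abs_le (habs ▸ abs_le.2 ⟨by linarith, by linarith⟩)
      (by linarith)), wedgeHeight_sub_comm]
  have hright : ∫⁻ x in Ioo (t / 2) (1 / 2),
      ENNReal.ofReal (1 / max (wedgeHeight x) (wedgeHeight (x - t)))
        = ∫⁻ x in Ioo (t / 2) (1 / 2), ENNReal.ofReal (1 / wedgeHeight x) := by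
    refine setLIntegral_congr_fun measurableSet_Ioo fun x ⟨hx₁, hx₂⟩ => ?_
    have habs : |x| = x := abs_of_pos (by linarith)
    rw [max_eq_left (wedgeHeight_le_of_abs_le
      (by rw [habs]; exact abs_le.2 ⟨by linarith, by linarith⟩) (by linarith))]
  -- Left of `t / 2` the second term of the `max` wins, and the reflection `x ↦ t - x` carries
  -- that half onto the right one.
  rw [hsplit, lintegral_union measurableSet_Ioo hdisj, ← setLIntegral_congr Ioo_ae_eq_Ioc, hleft,
    hright, setLIntegral_Ioo_comp_const_sub (fun x => ENNReal.ofReal (1 / wedgeHeight x)),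
    sub_half, sub_sub_cancel, two_mul]

/-- For `t ∈ (0,1)`, `λ(H ∩ (H + t)) = log (1 / sin (π t / 2))`. -/
theorem hyp_area_wedge_inter_translate (t : ℝ) (ht0 : 0 < t) (ht1 : t < 1) :
    hypMeasure (wedgeH ∩ htrans wedgeH t)
      = ENNReal.ofReal (Real.log (1 / Real.sin (π * t / 2))) := by
  rw [wedgeH_inter_htrans ht0.le, hypMeasure_setOf_lt measurableSet_Ioo (by fun_prop)
      (fun x hx => max_wedgeHeight_sub_pos ht0 hx),
    setLIntegral_Ioo_inv_max_wedgeHeight ht0 ht1,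
    setLIntegral_Ioo_inv_wedgeHeight (by positivity) (by linarith) le_rfl,
    ← ENNReal.ofReal_ofNat 2, ← ENNReal.ofReal_mul zero_le_two]
  congr 1
  rw [mul_one_div, sin_pi_div_two, log_one, one_div, log_inv, mul_div_assoc]
  ring
end

section
/- Let h : ℝ → ℝ be an increasing homeomorphism, I = [a, b] with halves I₁, I₂, τ and δ(I) as above. Then (1/|I|)∫_I (h(t) - h(a)) dt ≤ (3δ(I)/(1+3δ(I))) · (h(b) - h(a)). -/
/-! On each half of `[a, b]` the integrand `h t - h a` is bounded by its value at the right
endpoint, so the average is at most `(τ(I₁) + τ(I)) / 2`. Since `δ τ(I₂) = τ(I₁) + τ(I₂)² / τ(I₁)`,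
we have `τ(I₁) ≤ δ τ(I₂)`, i.e. `τ(I₁) ≤ δ / (1 + δ) · τ(I)`, so the average is at most
`(1 + 2δ) / (2 + 2δ) · τ(I)`, and `(1 + 2δ) / (2 + 2δ) ≤ 3δ / (1 + 3δ)` because `δ ≥ 2`. -/

open intervalIntegral

theorem MonotoneOn.intervalIntegral_le_sub_mul {f : ℝ → ℝ} {a b : ℝ} (hab : a ≤ b)
    (hf : MonotoneOn f (Set.Icc a b)) :
    ∫ t in a..b, f t ≤ (b - a) * f b := by
  calc ∫ t in a..b, f t ≤ ∫ _ in a..b, f b :=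
        integral_mono_on hab (hf.mono (Set.uIcc_of_le hab).le).intervalIntegrable
          intervalIntegrable_const fun t ht =>
          hf ht (Set.right_mem_Icc.mpr hab) ht.2
    _ = (b - a) * f b := by rw [integral_const, smul_eq_mul]

theorem MonotoneOn.intervalIntegral_le_midpoint {f : ℝ → ℝ} {a b : ℝ} (hab : a ≤ b)
    (hf : MonotoneOn f (Set.Icc a b)) :
    ∫ t in a..b, f t ≤ (b - a) / 2 * (f ((a + b) / 2) + f b) := by
  set m := (a + b) / 2
  have ham : a ≤ m := by unfold m; linarith
  have hmb : m ≤ b := by unfold m; linarith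
  have hf₁ : MonotoneOn f (Set.Icc a m) := hf.mono (Set.Icc_subset_Icc_right hmb)
  have hf₂ : MonotoneOn f (Set.Icc m b) := hf.mono (Set.Icc_subset_Icc_left ham)
  calc ∫ t in a..b, f t = (∫ t in a..m, f t) + ∫ t in m..b, f t :=
        (integral_add_adjacent_intervals
          (hf₁.mono (Set.uIcc_of_le ham).le).intervalIntegrable
          (hf₂.mono (Set.uIcc_of_le hmb).le).intervalIntegrable).symm
    _ ≤ (m - a) * f m + (b - m) * f b :=
        add_le_add (hf₁.intervalIntegral_le_sub_mul ham) (hf₂.intervalIntegral_le_sub_mul hmb)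
    _ = (b - a) / 2 * (f m + f b) := by unfold m; ring

theorem two_le_div_add_div {x y : ℝ} (hx : 0 < x) (hy : 0 < y) : 2 ≤ x / y + y / x := by
  rw [div_add_div _ _ hy.ne' hx.ne', le_div_iff₀ (by positivity)]
  nlinarith [sq_nonneg (x - y)]

theorem le_div_one_add_mul_add {x y : ℝ} (hx : 0 < x) (hy : 0 < y) :
    x ≤ (x / y + y / x) / (1 + (x / y + y / x)) * (x + y) := by
  have hδ := two_le_div_add_div hx hy
  rw [div_mul_eq_mul_div, le_div_iff₀ (by linarith)]
  have hxy : x ≤ (x / y + y / x) * y := by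
    have : (x / y + y / x) * y = x + y ^ 2 / x := by field_simp
    rw [this]
    linarith [show 0 ≤ y ^ 2 / x by positivity]
  nlinarith

theorem div_le_three_mul_div {δ : ℝ} (hδ : 1 ≤ δ) :
    (1 + 2 * δ) / (2 + 2 * δ) ≤ 3 * δ / (1 + 3 * δ) := by
  rw [div_le_div_iff₀ (by linarith) (by linarith)]
  nlinarith

theorem average_integral_bound_general (h : ℝ → ℝ) (hmono : StrictMono h)
    (a b : ℝ) (hab : a < b) :
    let m := (a + b) / 2
    let δ := (h m - h a) / (h b - h m) + (h b - h m) / (h m - h a)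
    (1 / (b - a)) * ∫ t in a..b, (h t - h a)
      ≤ (3 * δ / (1 + 3 * δ)) * (h b - h a) := by
  intro m δ
  have hτ₁ : 0 < h m - h a := sub_pos.mpr (hmono (by unfold m; linarith))
  have hτ₂ : 0 < h b - h m := sub_pos.mpr (hmono (by unfold m; linarith))
  have hτ : h b - h a = (h m - h a) + (h b - h m) := by ring
  have hδ : 2 ≤ δ := two_le_div_add_div hτ₁ hτ₂
  have hhalf : h m - h a ≤ δ / (1 + δ) * (h b - h a) := hτ ▸ le_div_one_add_mul_add hτ₁ hτ₂
  have hmid := MonotoneOn.intervalIntegral_le_midpoint (f := fun t => h t - h a) hab.le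
    fun _ _ _ _ hst => sub_le_sub_right (hmono.monotone hst) _
  calc (1 / (b - a)) * ∫ t in a..b, (h t - h a)
      ≤ ((h m - h a) + (h b - h a)) / 2 := by
        rw [one_div_mul_eq_div, div_le_iff₀ (by linarith)]
        linarith
    _ ≤ (δ / (1 + δ) * (h b - h a) + (h b - h a)) / 2 := by linarith
    _ = (1 + 2 * δ) / (2 + 2 * δ) * (h b - h a) := by field_simp; ring
    _ ≤ 3 * δ / (1 + 3 * δ) * (h b - h a) :=
        mul_le_mul_of_nonneg_right (div_le_three_mul_div (by linarith)) (by linarith)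

/-- Let `h` be an increasing homeomorphism of `ℝ`, `I = [a, b]` with halves `I₁, I₂`,
`τ(J) = h(sup J) - h(inf J)` and `δ = τ(I₁)/τ(I₂) + τ(I₂)/τ(I₁)`. Then
`(1/|I|) ∫_I (h(t) - h(a)) dt ≤ (3δ/(1+3δ)) (h(b) - h(a))`. -/
theorem average_integral_bound (h : ℝ → ℝ) (hmono : StrictMono h)
    (hcont : Continuous h) (hsurj : Function.Surjective h)
    (a b : ℝ) (hab : a < b) :
    let m := (a + b) / 2
    let δ := (h m - h a) / (h b - h m) + (h b - h m) / (h m - h a)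
    (1 / (b - a)) * ∫ t in a..b, (h t - h a)
      ≤ (3 * δ / (1 + 3 * δ)) * (h b - h a) :=
  average_integral_bound_general h hmono a b hab
end

section
/- Let L, c > 0 and suppose Ψ : (0,∞) → [0,1] is nonincreasing, satisfies Ψ(s²) ≤ c/s + Ψ(s)² for all s > 0, and Ψ(s₀) ≤ 1/2 for some s₀ ≥ max(1, (2c)²). Then there exist constants C, δ > 0 such that Ψ(s) ≤ C s^{-δ} for all s > 0. -/
/-!
Take `S ≥ max s₀ (8c) 2`, so that `Ψ(S) ≤ 1/2`, and `δ > 0` so small that `S^{2δ} = 3/2`.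
The bound `Ψ(s) ≤ (3/4) s^{-δ}` holds on `[S, S²]` by monotonicity, and it propagates from
`t` to `t²` because `Ψ(t²) ≤ c/t + (9/16) t^{-2δ}` and `c/t ≤ (3/16) t^{-2δ}` for `t ≥ S ≥ 8c`.
Every `s ≥ S` is reached from `[S, S²]` by finitely many squarings.
-/

open Real

theorem le_induction_sq {S : ℝ} (hS : 1 < S) {P : ℝ → Prop}
    (base : ∀ s, S ≤ s → s ≤ S ^ 2 → P s) (step : ∀ t, S ≤ t → P t → P (t ^ 2)) :
    ∀ s, S ≤ s → P s := by
  have hS0 : 0 ≤ S := by linarith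
  have upto : ∀ n : ℕ, ∀ s, S ≤ s → s ≤ S ^ 2 ^ (n + 1) → P s := by
    intro n
    induction n with
    | zero => simpa using base
    | succ n ih =>
      intro s hSs hs
      rcases le_or_gt s (S ^ 2) with hsS | hsS
      · exact base s hSs hsS
      have hs0 : 0 ≤ s := hS0.trans hSs
      have hSt : S ≤ √s := Real.le_sqrt_of_sq_le hsS.le
      have htS : √s ≤ S ^ 2 ^ (n + 1) := by
        rw [Real.sqrt_le_left (by positivity), ← pow_mul, ← pow_succ]
        exact hs
      simpa [Real.sq_sqrt hs0] using step _ hSt (ih _ hSt htS)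
  intro s hSs
  obtain ⟨n, hn⟩ := pow_unbounded_of_one_lt s hS
  refine upto n s hSs (hn.le.trans (pow_le_pow_right₀ hS.le ?_))
  exact (Nat.lt_two_pow_self).le.trans (Nat.pow_le_pow_right two_pos n.le_succ)

theorem exists_rpow_neg_two_mul_eq {S : ℝ} (hS : 3 / 2 ≤ S) :
    ∃ δ : ℝ, 0 < δ ∧ 2 * δ ≤ 1 ∧ S ^ (-(2 * δ)) = 2 / 3 := by
  have hS1 : 1 < S := by linarith
  refine ⟨logb S (3 / 2) / 2, by have := logb_pos hS1 (by norm_num : (1 : ℝ) < 3 / 2); positivity,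
    ?_, ?_⟩
  · rw [mul_div_cancel₀ _ two_ne_zero, logb_le_iff_le_rpow hS1 (by norm_num), rpow_one]
    exact hS
  · rw [mul_div_cancel₀ _ two_ne_zero, rpow_neg (by linarith), rpow_logb (by linarith) hS1.ne'
      (by norm_num)]
    norm_num

theorem forall_le_mul_rpow_neg_of_forall_ge {Ψ : ℝ → ℝ} {S K δ : ℝ} (hS : 0 < S) (hδ : 0 ≤ δ)
    (hle : ∀ s, 0 < s → Ψ s ≤ 1) (hge : ∀ s, S ≤ s → Ψ s ≤ K * s ^ (-δ)) :
    ∀ s, 0 < s → Ψ s ≤ max K (S ^ δ) * s ^ (-δ) := by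
  intro s hs
  have hpos : 0 < s ^ (-δ) := rpow_pos_of_pos hs _
  rcases le_or_gt S s with hSs | hsS
  · exact (hge s hSs).trans (mul_le_mul_of_nonneg_right (le_max_left _ _) hpos.le)
  calc Ψ s ≤ 1 := hle s hs
    _ = S ^ δ * S ^ (-δ) := by rw [← rpow_add hS, add_neg_cancel, rpow_zero]
    _ ≤ max K (S ^ δ) * s ^ (-δ) := mul_le_mul (le_max_right _ _)
      (rpow_le_rpow_of_nonpos hs hsS.le (neg_nonpos.2 hδ)) (rpow_pos_of_pos hS _).le
      ((rpow_pos_of_pos hS _).le.trans (le_max_right _ _))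

theorem le_three_quarters_mul_rpow_neg {Ψ : ℝ → ℝ} {c S δ : ℝ} (hS : 1 < S) (hcS : 8 * c ≤ S)
    (hδ : 0 ≤ δ) (hδ₁ : 2 * δ ≤ 1) (hSδ : S ^ (-(2 * δ)) = 2 / 3)
    (hnonneg : ∀ s, 0 < s → 0 ≤ Ψ s) (hmono : ∀ s t, 0 < s → s ≤ t → Ψ t ≤ Ψ s)
    (hineq : ∀ s, 0 < s → Ψ (s ^ 2) ≤ c / s + Ψ s ^ 2) (hΨS : Ψ S ≤ 1 / 2) :
    ∀ s, S ≤ s → Ψ s ≤ 3 / 4 * s ^ (-δ) := by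
  have hS0 : 0 < S := by linarith
  have rpow_sq : ∀ t : ℝ, 0 < t → (t ^ 2) ^ (-δ) = t ^ (-(2 * δ)) := fun t ht => by
    rw [← rpow_natCast_mul ht.le]
    norm_num
  refine le_induction_sq hS (fun s hSs hsS => ?_) (fun t hSt ih => ?_)
  · have hs0 : 0 < s := hS0.trans_le hSs
    have : S ^ (-(2 * δ)) ≤ s ^ (-δ) := by
      rw [← rpow_sq S hS0]
      exact rpow_le_rpow_of_nonpos hs0 hsS (neg_nonpos.2 hδ)
    linarith [hmono S s hS0 hSs]
  have ht0 : 0 < t := hS0.trans_le hSt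
  -- `t^{1-2δ}` is nondecreasing, so it is at least `S^{1-2δ} = (2/3) S ≥ 16c/3`.
  have hc : c / t ≤ 3 / 16 * t ^ (-(2 * δ)) := by
    have hgrow : S ^ (1 - 2 * δ) ≤ t ^ (1 - 2 * δ) := rpow_le_rpow hS0.le hSt (by linarith)
    rw [sub_eq_add_neg, rpow_add hS0, rpow_add ht0, rpow_one, rpow_one, hSδ] at hgrow
    rw [div_le_iff₀ ht0]
    linarith
  have hsq : Ψ t ^ 2 ≤ 9 / 16 * t ^ (-(2 * δ)) := by
    calc Ψ t ^ 2 ≤ (3 / 4 * t ^ (-δ)) ^ 2 := pow_le_pow_left₀ (hnonneg t ht0) ih 2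
      _ = 9 / 16 * t ^ (-(2 * δ)) := by
        rw [mul_pow, rpow_pow_comm ht0.le, rpow_sq t ht0]
        norm_num
  rw [rpow_sq t ht0]
  linarith [hineq t ht0]

theorem functional_inequality_power_decay_general (c : ℝ) (Ψ : ℝ → ℝ)
    (hrange : ∀ s : ℝ, 0 < s → Ψ s ∈ Set.Icc (0:ℝ) 1)
    (hmono : ∀ s t : ℝ, 0 < s → s ≤ t → Ψ t ≤ Ψ s)
    (hineq : ∀ s : ℝ, 0 < s → Ψ (s ^ 2) ≤ c / s + (Ψ s) ^ 2)
    (s₀ : ℝ) (hs₀ : max 1 ((2 * c) ^ 2) ≤ s₀) (hΨs₀ : Ψ s₀ ≤ 1 / 2) :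
    ∃ C δ : ℝ, 0 < C ∧ 0 < δ ∧ ∀ s : ℝ, 0 < s → Ψ s ≤ C * s ^ (-δ) := by
  set S := max s₀ (max (8 * c) 2)
  have hs₀pos : 0 < s₀ := one_pos.trans_le ((le_max_left _ _).trans hs₀)
  have hS2 : 2 ≤ S := (le_max_right _ _).trans (le_max_right _ _)
  have hΨS : Ψ S ≤ 1 / 2 := (hmono s₀ S hs₀pos (le_max_left _ _)).trans hΨs₀
  obtain ⟨δ, hδ, hδ₁, hSδ⟩ := exists_rpow_neg_two_mul_eq (S := S) (by linarith)
  have hdecay := le_three_quarters_mul_rpow_neg (by linarith) ((le_max_left _ _).trans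
    (le_max_right _ _)) hδ.le hδ₁ hSδ (fun s hs => (hrange s hs).1) hmono hineq hΨS
  exact ⟨max (3 / 4) (S ^ δ), δ, by positivity, hδ, forall_le_mul_rpow_neg_of_forall_ge
    (by linarith) hδ.le (fun s hs => (hrange s hs).2) hdecay⟩

/-- Functional inequality: if `Ψ : (0,∞) → [0,1]` is nonincreasing, satisfies
`Ψ(s²) ≤ c/s + Ψ(s)²` for all `s > 0`, and `Ψ(s₀) ≤ 1/2` for some
`s₀ ≥ max 1 (2c)²`, then `Ψ(s) ≤ C s^(-δ)` for some `C, δ > 0`. -/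
theorem functional_inequality_power_decay (c : ℝ) (hc : 0 < c) (Ψ : ℝ → ℝ)
    (hrange : ∀ s : ℝ, 0 < s → Ψ s ∈ Set.Icc (0:ℝ) 1)
    (hmono : ∀ s t : ℝ, 0 < s → s ≤ t → Ψ t ≤ Ψ s)
    (hineq : ∀ s : ℝ, 0 < s → Ψ (s ^ 2) ≤ c / s + (Ψ s) ^ 2)
    (s₀ : ℝ) (hs₀ : max 1 ((2 * c) ^ 2) ≤ s₀) (hΨs₀ : Ψ s₀ ≤ 1 / 2) :
    ∃ C δ : ℝ, 0 < C ∧ 0 < δ ∧ ∀ s : ℝ, 0 < s → Ψ s ≤ C * s ^ (-δ) :=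
  functional_inequality_power_decay_general c Ψ hrange hmono hineq s₀ hs₀ hΨs₀
end

section
/- Let M, M₁, M₂, B be positive random variables such that M₁, M₂, B are mutually independent, M₁ and M₂ have the same distribution as M, all negative moments of B are finite, and M ≥ B(M₁ + M₂) almost surely. If E[M^{-q}] < ∞ for some q > 0, then E[M^{-2q}] < ∞. -/
/-!
Since `M ≥ B (M₁ + M₂)` and `(M₁ + M₂)² ≥ 4 M₁ M₂` (AM-GM), pointwise
`M^(-2q) ≤ 4^(-q) M₁^(-q) M₂^(-q) B^(-2q)`. By independence the right-hand side is integrable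
as soon as each factor is, and `M₁^(-q)`, `M₂^(-q)` are integrable because `M₁`, `M₂` have the
law of `M`.
-/

open MeasureTheory ProbabilityTheory

namespace Real

theorem add_rpow_neg_two_mul_le {x y q : ℝ} (hx : 0 < x) (hy : 0 < y) (hq : 0 ≤ q) :
    (x + y) ^ (-(2 * q)) ≤ 4 ^ (-q) * (x ^ (-q) * y ^ (-q)) := by
  have amgm : 4 * (x * y) ≤ (x + y) ^ 2 := by nlinarith [sq_nonneg (x - y)]
  calc (x + y) ^ (-(2 * q)) = ((x + y) ^ 2) ^ (-q) := by
        rw [← rpow_natCast, ← rpow_mul (by positivity)]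
        norm_num
    _ ≤ (4 * (x * y)) ^ (-q) := rpow_le_rpow_of_nonpos (by positivity) amgm (by linarith)
    _ = 4 ^ (-q) * (x ^ (-q) * y ^ (-q)) := by
        rw [mul_rpow (by norm_num) (by positivity), mul_rpow hx.le hy.le]

theorem rpow_neg_two_mul_le_of_mul_add_le {m x y b q : ℝ} (hx : 0 < x) (hy : 0 < y) (hb : 0 < b)
    (hq : 0 ≤ q) (h : b * (x + y) ≤ m) :
    m ^ (-(2 * q)) ≤ 4 ^ (-q) * (x ^ (-q) * y ^ (-q) * b ^ (-(2 * q))) :=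
  calc m ^ (-(2 * q)) ≤ (b * (x + y)) ^ (-(2 * q)) :=
        rpow_le_rpow_of_nonpos (by positivity) h (by linarith)
    _ = b ^ (-(2 * q)) * (x + y) ^ (-(2 * q)) := mul_rpow hb.le (by positivity)
    _ ≤ b ^ (-(2 * q)) * (4 ^ (-q) * (x ^ (-q) * y ^ (-q))) := by
        gcongr
        exact add_rpow_neg_two_mul_le hx hy hq
    _ = 4 ^ (-q) * (x ^ (-q) * y ^ (-q) * b ^ (-(2 * q))) := by ring

end Real

namespace ProbabilityTheory

theorem iIndepFun.integrable_comp_mul_comp_mul_comp {Ω β : Type*} [MeasurableSpace Ω]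
    [MeasurableSpace β] {μ : Measure Ω} {X Y Z : Ω → β} (h : iIndepFun ![X, Y, Z] μ)
    (hX : Measurable X) (hY : Measurable Y) (hZ : Measurable Z) {f g k : β → ℝ}
    (hf : Measurable f) (hg : Measurable g) (hk : Measurable k)
    (hfX : Integrable (fun ω => f (X ω)) μ) (hgY : Integrable (fun ω => g (Y ω)) μ)
    (hkZ : Integrable (fun ω => k (Z ω)) μ) :
    Integrable (fun ω => f (X ω) * g (Y ω) * k (Z ω)) μ := by
  have hmeas : ∀ i, Measurable (![X, Y, Z] i) := by
    intro i
    fin_cases i <;> assumption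
  have hXY : IndepFun X Y μ := h.indepFun (show (0 : Fin 3) ≠ 1 by decide)
  have hXYZ : IndepFun (fun ω => (X ω, Y ω)) Z μ :=
    h.indepFun_prodMk hmeas 0 1 2 (by decide) (by decide)
  have hfg : Integrable (fun ω => f (X ω) * g (Y ω)) μ :=
    (hXY.comp hf hg).integrable_mul hfX hgY
  exact (hXYZ.comp ((hf.comp measurable_fst).mul (hg.comp measurable_snd)) hk).integrable_mul
    hfg hkZ

end ProbabilityTheory

theorem negative_moment_bootstrap_general {Ω : Type*} [MeasurableSpace Ω]
    (μ : Measure Ω)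
    (M M₁ M₂ B : Ω → ℝ)
    (hM : Measurable M) (hM₁ : Measurable M₁) (hM₂ : Measurable M₂) (hB : Measurable B)
    (hM₁pos : ∀ᵐ ω ∂μ, 0 < M₁ ω)
    (hM₂pos : ∀ᵐ ω ∂μ, 0 < M₂ ω) (hBpos : ∀ᵐ ω ∂μ, 0 < B ω)
    (hindep : iIndepFun (m := fun _ : Fin 3 => (inferInstance : MeasurableSpace ℝ))
      ![M₁, M₂, B] μ)
    (hid₁ : Measure.map M₁ μ = Measure.map M μ)
    (hid₂ : Measure.map M₂ μ = Measure.map M μ)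
    (hBmom : ∀ r : ℝ, 0 < r → Integrable (fun ω => (B ω) ^ (-r)) μ)
    (hdom : ∀ᵐ ω ∂μ, B ω * (M₁ ω + M₂ ω) ≤ M ω)
    (q : ℝ) (hq : 0 < q)
    (hMq : Integrable (fun ω => (M ω) ^ (-q)) μ) :
    Integrable (fun ω => (M ω) ^ (-(2 * q))) μ := by
  have hpow : ∀ r : ℝ, Measurable fun x : ℝ => x ^ r := fun r => by fun_prop
  have hM₁q : Integrable (fun ω => M₁ ω ^ (-q)) μ :=
    ((IdentDistrib.mk hM₁.aemeasurable hM.aemeasurable hid₁).comp (hpow _)).integrable_iff.2 hMq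
  have hM₂q : Integrable (fun ω => M₂ ω ^ (-q)) μ :=
    ((IdentDistrib.mk hM₂.aemeasurable hM.aemeasurable hid₂).comp (hpow _)).integrable_iff.2 hMq
  have hprod := hindep.integrable_comp_mul_comp_mul_comp hM₁ hM₂ hB (hpow _) (hpow _) (hpow _)
    hM₁q hM₂q (hBmom (2 * q) (by positivity))
  refine (hprod.const_mul (4 ^ (-q))).mono' ((hpow _).comp hM).aestronglyMeasurable ?_
  filter_upwards [hM₁pos, hM₂pos, hBpos, hdom] with ω h₁ h₂ hb hd
  have hm : 0 < M ω := (mul_pos hb (add_pos h₁ h₂)).trans_le hd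
  rw [Real.norm_of_nonneg (Real.rpow_nonneg hm.le _)]
  exact Real.rpow_neg_two_mul_le_of_mul_add_le h₁ h₂ hb hq.le hd

/-- Bootstrapping negative moments: if `M ≥ B(M₁+M₂)` a.s. with `M₁, M₂, B`
mutually independent, `M₁, M₂` distributed as `M`, all negative moments of `B`
finite, and `E[M^(-q)] < ∞` for some `q > 0`, then `E[M^(-2q)] < ∞`. -/
theorem negative_moment_bootstrap {Ω : Type*} [MeasurableSpace Ω]
    (μ : Measure Ω) [IsProbabilityMeasure μ]
    (M M₁ M₂ B : Ω → ℝ)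
    (hM : Measurable M) (hM₁ : Measurable M₁) (hM₂ : Measurable M₂) (hB : Measurable B)
    (hMpos : ∀ᵐ ω ∂μ, 0 < M ω) (hM₁pos : ∀ᵐ ω ∂μ, 0 < M₁ ω)
    (hM₂pos : ∀ᵐ ω ∂μ, 0 < M₂ ω) (hBpos : ∀ᵐ ω ∂μ, 0 < B ω)
    (hindep : iIndepFun (m := fun _ : Fin 3 => (inferInstance : MeasurableSpace ℝ))
      ![M₁, M₂, B] μ)
    (hid₁ : Measure.map M₁ μ = Measure.map M μ)
    (hid₂ : Measure.map M₂ μ = Measure.map M μ)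
    (hBmom : ∀ r : ℝ, 0 < r → Integrable (fun ω => (B ω) ^ (-r)) μ)
    (hdom : ∀ᵐ ω ∂μ, B ω * (M₁ ω + M₂ ω) ≤ M ω)
    (q : ℝ) (hq : 0 < q)
    (hMq : Integrable (fun ω => (M ω) ^ (-q)) μ) :
    Integrable (fun ω => (M ω) ^ (-(2 * q))) μ :=
  negative_moment_bootstrap_general μ M M₁ M₂ B hM hM₁ hM₂ hB hM₁pos hM₂pos hBpos hindep hid₁ hid₂
    hBmom hdom q hq hMq
end
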